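/- arXiv:1604.08378 — 2 statements merged into one kernel-verified Lean document; each statement's English description precedes it below -/
import Mathlib

section
/- Coupling bound for Wasserstein distance: let μ, ν be Borel probability measures on a metric space (M, d). Then for every x_0 ∈ M and every R > 0, W_1(μ, ν) ≤ 4R·|μ−ν|(B(x_0,R)) + 32·∫_{R/2}^∞ |μ−ν|(B(x_0,r)^c) dr, where |μ−ν| denotes the total variation measure of the signed measure μ−ν. -/
open MeasureTheory ENNReal

/-- The Wasserstein-1 distance: infimum of `∫ d(x,y) dγ` over couplings `γ` of `μ, ν`. -/
noncomputable def wasserstein1 {M : Type*} [MetricSpace M] [MeasurableSpace M]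
    (μ ν : Measure M) : ℝ≥0∞ :=
  ⨅ γ ∈ {γ : Measure (M × M) |
      γ.map Prod.fst = μ ∧ γ.map Prod.snd = ν},
    ∫⁻ q : M × M, edist q.1 q.2 ∂γ

set_option maxHeartbeats 1000000 in
lemma aux_coupling {M : Type*} [MetricSpace M] [MeasurableSpace M] [BorelSpace M]
    (μ ν : Measure M) [IsProbabilityMeasure μ] [IsProbabilityMeasure ν] (x₀ : M) :
    wasserstein1 μ ν ≤
      ∫⁻ x, edist x x₀ ∂((μ.toSignedMeasure - ν.toSignedMeasure).totalVariation) := by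
  obtain ⟨P, hPm, hP1, hP2⟩ := hahn_decomposition (μ := μ) (ν := ν)
  set ρp : Measure M := μ.restrict P - ν.restrict P with hρp
  set ρm : Measure M := ν.restrict Pᶜ - μ.restrict Pᶜ with hρm
  set β : Measure M := ν.restrict P + μ.restrict Pᶜ with hβ
  have hle1 : ν.restrict P ≤ μ.restrict P := by
    refine Measure.le_iff.mpr fun t ht => ?_
    rw [Measure.restrict_apply ht, Measure.restrict_apply ht]
    exact hP1 _ (ht.inter hPm) Set.inter_subset_right
  have hle2 : μ.restrict Pᶜ ≤ ν.restrict Pᶜ := by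
    refine Measure.le_iff.mpr fun t ht => ?_
    rw [Measure.restrict_apply ht, Measure.restrict_apply ht]
    exact hP2 _ (ht.inter hPm.compl) Set.inter_subset_right
  haveI hfinp : IsFiniteMeasure ρp := isFiniteMeasure_of_le _ Measure.sub_le
  haveI hfinm : IsFiniteMeasure ρm := isFiniteMeasure_of_le _ Measure.sub_le
  have hμdec : μ = β + ρp := by
    rw [hβ, add_comm (ν.restrict P) (μ.restrict Pᶜ), add_assoc, add_comm (ν.restrict P) ρp,
      Measure.sub_add_cancel_of_le hle1, add_comm,
      Measure.restrict_add_restrict_compl hPm]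
  have hνdec : ν = β + ρm := by
    rw [hβ, add_assoc, add_comm (μ.restrict Pᶜ) ρm,
      Measure.sub_add_cancel_of_le hle2, Measure.restrict_add_restrict_compl hPm]
  set m : ℝ≥0∞ := ρp Set.univ with hm
  have hmne : m ≠ ∞ := measure_ne_top _ _
  have hmass : ρm Set.univ = m := by
    have h1 : β Set.univ + ρp Set.univ = β Set.univ + ρm Set.univ := by
      rw [← Measure.add_apply, ← Measure.add_apply, ← hμdec, ← hνdec,
        measure_univ, measure_univ]
    exact ((ENNReal.add_right_inj (measure_ne_top β _)).mp h1).symm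
  set γ : Measure (M × M) :=
    (Measure.map (fun x => (x, x)) β) + m⁻¹ • (ρp.prod ρm) with hγ
  have hdiagm : Measurable fun x : M => (x, x) := measurable_id.prodMk measurable_id
  have hsmul : (m⁻¹ * m) • ρp = ρp ∧ (m⁻¹ * m) • ρm = ρm := by
    rcases eq_or_ne m 0 with h0 | h0
    · have hp0 : ρp = 0 := by rwa [← Measure.measure_univ_eq_zero, ← hm]
      have hm0 : ρm = 0 := by rwa [← Measure.measure_univ_eq_zero, hmass]
      simp [hp0, hm0]
    · rw [ENNReal.inv_mul_cancel h0 hmne, one_smul, one_smul]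
      exact ⟨rfl, rfl⟩
  have hfst : γ.map Prod.fst = μ := by
    rw [hγ, Measure.map_add _ _ measurable_fst, Measure.map_smul,
      Measure.map_map measurable_fst hdiagm, Measure.map_fst_prod]
    have : (Prod.fst ∘ fun x : M => (x, x)) = id := rfl
    rw [this, Measure.map_id, hmass, smul_smul, hsmul.1, ← hμdec]
  have hsnd : γ.map Prod.snd = ν := by
    rw [hγ, Measure.map_add _ _ measurable_snd, Measure.map_smul,
      Measure.map_map measurable_snd hdiagm, Measure.map_snd_prod]
    have : (Prod.snd ∘ fun x : M => (x, x)) = id := rfl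
    rw [this, Measure.map_id, ← hm, smul_smul, hsmul.2, ← hνdec]
  have hW : wasserstein1 μ ν ≤ ∫⁻ q : M × M, edist q.1 q.2 ∂γ := by
    exact iInf₂_le γ ⟨hfst, hsnd⟩
  have hA : Measurable fun x : M => edist x x₀ :=
    (continuous_id.edist continuous_const).measurable
  have hB : Measurable fun x : M => edist x₀ x :=
    (continuous_const.edist continuous_id).measurable
  set A := ∫⁻ x, edist x x₀ ∂ρp with hAdef
  set B := ∫⁻ x, edist x x₀ ∂ρm with hBdef
  have hprod : ∫⁻ q : M × M, edist q.1 q.2 ∂(ρp.prod ρm) ≤ m * A + m * B := by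
    have step1 : ∫⁻ q : M × M, edist q.1 q.2 ∂(ρp.prod ρm)
        ≤ ∫⁻ q : M × M, (edist q.1 x₀ + edist x₀ q.2) ∂(ρp.prod ρm) :=
      lintegral_mono fun q => edist_triangle _ _ _
    have step2 : ∫⁻ q : M × M, edist q.1 x₀ ∂(ρp.prod ρm) = m * A := by
      have := lintegral_map (μ := ρp.prod ρm) hA measurable_fst
      rw [Measure.map_fst_prod, lintegral_smul_measure] at this
      rw [← this, hmass]
      exact smul_eq_mul _ _
    have step3 : ∫⁻ q : M × M, edist x₀ q.2 ∂(ρp.prod ρm) = m * B := by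
      have := lintegral_map (μ := ρp.prod ρm) hB measurable_snd
      rw [Measure.map_snd_prod, lintegral_smul_measure] at this
      rw [← this, ← hm]
      congr 1
      exact lintegral_congr fun x => edist_comm x₀ x
    calc ∫⁻ q : M × M, edist q.1 q.2 ∂(ρp.prod ρm)
        ≤ ∫⁻ q : M × M, (edist q.1 x₀ + edist x₀ q.2) ∂(ρp.prod ρm) := step1
      _ = m * A + m * B := by
          have hm1 : Measurable fun q : M × M => edist q.1 x₀ := hA.comp measurable_fst
          rw [lintegral_add_left hm1, step2, step3]
  have hcost : ∫⁻ q : M × M, edist q.1 q.2 ∂γ ≤ A + B := by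
    rw [hγ, lintegral_add_measure, lintegral_smul_measure]
    have hdiag0 : ∫⁻ q : M × M, edist q.1 q.2 ∂(Measure.map (fun x => (x, x)) β) = 0 := by
      refine le_antisymm ?_ zero_le
      calc ∫⁻ q : M × M, edist q.1 q.2 ∂(Measure.map (fun x => (x, x)) β)
          ≤ ∫⁻ x : M, edist x x ∂β := lintegral_map_le _ (fun x : M => (x, x))
        _ = 0 := by simp
    rw [hdiag0, zero_add]
    have hinv : m⁻¹ * m ≤ 1 := by
      rcases eq_or_ne m 0 with h0 | h0
      · simp [h0]
      · rw [ENNReal.inv_mul_cancel h0 hmne]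
    calc m⁻¹ * ∫⁻ q : M × M, edist q.1 q.2 ∂(ρp.prod ρm)
        ≤ m⁻¹ * (m * A + m * B) := by gcongr
      _ = (m⁻¹ * m) * (A + B) := by ring
      _ ≤ 1 * (A + B) := by gcongr
      _ = A + B := one_mul _
  -- ρp + ρm ≤ total variation
  have htv : ρp + ρm ≤ (μ.toSignedMeasure - ν.toSignedMeasure).totalVariation := by
    refine Measure.le_iff.mpr fun t ht => ?_
    set s : SignedMeasure M := μ.toSignedMeasure - ν.toSignedMeasure with hs
    set J := s.toJordanDecomposition with hJ
    haveI : IsFiniteMeasure J.posPart := J.posPart_finite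
    haveI : IsFiniteMeasure J.negPart := J.negPart_finite
    have hsapp : ∀ u : Set M, MeasurableSet u →
        s u = (J.posPart u).toReal - (J.negPart u).toReal := by
      intro u hu
      conv_lhs => rw [← s.toSignedMeasure_toJordanDecomposition]
      rw [JordanDecomposition.toSignedMeasure, MeasureTheory.VectorMeasure.sub_apply,
        Measure.toSignedMeasure_apply_measurable hu,
        Measure.toSignedMeasure_apply_measurable hu]
      rfl
    have hsapp2 : ∀ u : Set M, MeasurableSet u → s u = (μ u).toReal - (ν u).toReal :=
      fun u hu => Measure.toSignedMeasure_sub_apply hu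
    have hρpt : ρp t = μ (t ∩ P) - ν (t ∩ P) := by
      rw [hρp, Measure.sub_apply ht hle1, Measure.restrict_apply ht, Measure.restrict_apply ht]
    have hρmt : ρm t = ν (t ∩ Pᶜ) - μ (t ∩ Pᶜ) := by
      rw [hρm, Measure.sub_apply ht hle2, Measure.restrict_apply ht, Measure.restrict_apply ht]
    have hp : ρp t ≤ J.posPart t := by
      rw [← ENNReal.toReal_le_toReal (measure_ne_top _ _) (measure_ne_top _ _), hρpt,
        ENNReal.toReal_sub_of_le (hP1 _ (ht.inter hPm) Set.inter_subset_right)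
          (measure_ne_top _ _)]
      have h1 : (μ (t ∩ P)).toReal - (ν (t ∩ P)).toReal = s (t ∩ P) :=
        (hsapp2 _ (ht.inter hPm)).symm
      rw [h1, hsapp _ (ht.inter hPm)]
      have h2 : (J.posPart (t ∩ P)).toReal ≤ (J.posPart t).toReal :=
        ENNReal.toReal_mono (measure_ne_top _ _) (measure_mono Set.inter_subset_left)
      have h3 : (0:ℝ) ≤ (J.negPart (t ∩ P)).toReal := ENNReal.toReal_nonneg
      linarith
    have hn : ρm t ≤ J.negPart t := by
      rw [← ENNReal.toReal_le_toReal (measure_ne_top _ _) (measure_ne_top _ _), hρmt,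
        ENNReal.toReal_sub_of_le (hP2 _ (ht.inter hPm.compl) Set.inter_subset_right)
          (measure_ne_top _ _)]
      have h1 : (μ (t ∩ Pᶜ)).toReal - (ν (t ∩ Pᶜ)).toReal = s (t ∩ Pᶜ) :=
        (hsapp2 _ (ht.inter hPm.compl)).symm
      have h1' : (ν (t ∩ Pᶜ)).toReal - (μ (t ∩ Pᶜ)).toReal = -s (t ∩ Pᶜ) := by
        rw [← h1]; ring
      rw [h1', hsapp _ (ht.inter hPm.compl)]
      have h2 : (J.negPart (t ∩ Pᶜ)).toReal ≤ (J.negPart t).toReal :=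
        ENNReal.toReal_mono (measure_ne_top _ _) (measure_mono Set.inter_subset_left)
      have h3 : (0:ℝ) ≤ (J.posPart (t ∩ Pᶜ)).toReal := ENNReal.toReal_nonneg
      linarith
    have : (μ.toSignedMeasure - ν.toSignedMeasure).totalVariation t
        = J.posPart t + J.negPart t := by
      rw [SignedMeasure.totalVariation, Measure.add_apply, ← hs, ← hJ]
    rw [this, Measure.add_apply]
    exact add_le_add hp hn
  calc wasserstein1 μ ν ≤ ∫⁻ q : M × M, edist q.1 q.2 ∂γ := hW
    _ ≤ A + B := hcost
    _ = ∫⁻ x, edist x x₀ ∂(ρp + ρm) := (lintegral_add_measure _ _ _).symm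
    _ ≤ ∫⁻ x, edist x x₀ ∂((μ.toSignedMeasure - ν.toSignedMeasure).totalVariation) :=
        lintegral_mono' htv le_rfl


lemma aux_layercake {M : Type*} [MetricSpace M] [MeasurableSpace M] [BorelSpace M]
    (σ : Measure M) [IsFiniteMeasure σ] (x₀ : M) (R : ℝ) (hR : 0 < R) :
    ∫⁻ x, edist x x₀ ∂σ ≤ ENNReal.ofReal (4*R) * σ (Metric.ball x₀ R)
      + 32 * ∫⁻ r in Set.Ioi (R/2), σ (Metric.ball x₀ r)ᶜ := by
  set g : ℝ → ℝ≥0∞ := fun r => σ (Metric.ball x₀ r)ᶜ with hg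
  have hganti : Antitone g := fun r s hrs =>
    measure_mono (Set.compl_subset_compl.2 (Metric.ball_subset_ball hrs))
  have hgm : Measurable g := Antitone.measurable hganti
  set I : ℝ≥0∞ := ∫⁻ r in Set.Ioi (R/2), g r with hI
  have key : ∫⁻ x, edist x x₀ ∂σ = ∫⁻ t in Set.Ioi (0:ℝ), σ {a | t < dist a x₀} := by
    simp_rw [edist_dist]
    exact lintegral_eq_lintegral_meas_lt σ (ae_of_all _ fun x => dist_nonneg)
      ((continuous_id.dist continuous_const).measurable.aemeasurable)
  have hsub : ∀ t : ℝ, σ {a | t < dist a x₀} ≤ g t := by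
    intro t
    apply measure_mono
    intro a ha
    simp only [Set.mem_compl_iff, Metric.mem_ball]
    exact not_lt.2 (le_of_lt ha)
  rw [key]
  have hsplit : Set.Ioi (0:ℝ) = Set.Ioc 0 R ∪ Set.Ioi R := (Set.Ioc_union_Ioi_eq_Ioi hR.le).symm
  rw [hsplit, lintegral_union measurableSet_Ioi (Set.Ioc_disjoint_Ioi le_rfl)]
  have h1 : ∫⁻ t in Set.Ioc (0:ℝ) R, σ {a | t < dist a x₀}
      ≤ (σ (Metric.ball x₀ R) + g R) * ENNReal.ofReal R := by
    calc ∫⁻ t in Set.Ioc (0:ℝ) R, σ {a | t < dist a x₀}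
        ≤ ∫⁻ _ in Set.Ioc (0:ℝ) R, (σ (Metric.ball x₀ R) + g R) := by
          apply lintegral_mono
          intro t
          rw [measure_add_measure_compl measurableSet_ball]
          exact measure_mono (Set.subset_univ _)
      _ = (σ (Metric.ball x₀ R) + g R) * ENNReal.ofReal R := by
          rw [setLIntegral_const, Real.volume_Ioc, sub_zero]
  have h2 : g R * ENNReal.ofReal R ≤ 2 * I := by
    have hsubset : Set.Ioc (R/2) R ⊆ Set.Ioi (R/2) := Set.Ioc_subset_Ioi_self
    have : g R * ENNReal.ofReal (R/2) ≤ ∫⁻ r in Set.Ioc (R/2) R, g r := by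
      calc g R * ENNReal.ofReal (R/2)
          = ∫⁻ _ in Set.Ioc (R/2) R, g R := by
            rw [setLIntegral_const, Real.volume_Ioc, show R - R/2 = R/2 by ring]
        _ ≤ ∫⁻ r in Set.Ioc (R/2) R, g r := by
            apply setLIntegral_mono hgm
            intro r hr
            exact hganti hr.2
    have h3 : ∫⁻ r in Set.Ioc (R/2) R, g r ≤ I := lintegral_mono_set hsubset
    calc g R * ENNReal.ofReal R = 2 * (g R * ENNReal.ofReal (R/2)) := by
          rw [← mul_assoc, mul_comm (2:ℝ≥0∞), mul_assoc, ← ENNReal.ofReal_ofNat,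
            ← ENNReal.ofReal_mul (by norm_num)]
          congr 1
          ring
      _ ≤ 2 * I := by
          gcongr
          exact this.trans h3
  have h4 : ∫⁻ t in Set.Ioi R, σ {a | t < dist a x₀} ≤ I := by
    calc ∫⁻ t in Set.Ioi R, σ {a | t < dist a x₀}
        ≤ ∫⁻ t in Set.Ioi R, g t := setLIntegral_mono hgm (fun t _ => hsub t)
      _ ≤ I := lintegral_mono_set (Set.Ioi_subset_Ioi (by linarith))
  calc (∫⁻ t in Set.Ioc (0:ℝ) R, σ {a | t < dist a x₀})
        + ∫⁻ t in Set.Ioi R, σ {a | t < dist a x₀}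
      ≤ (σ (Metric.ball x₀ R) + g R) * ENNReal.ofReal R + I := add_le_add h1 h4
    _ = ENNReal.ofReal R * σ (Metric.ball x₀ R) + (g R * ENNReal.ofReal R + I) := by ring
    _ ≤ ENNReal.ofReal (4*R) * σ (Metric.ball x₀ R) + (2 * I + I) := by
        gcongr
        · linarith
    _ ≤ ENNReal.ofReal (4*R) * σ (Metric.ball x₀ R) + 32 * I := by
        gcongr
        calc 2 * I + I = 3 * I := by ring
          _ ≤ 32 * I := by gcongr <;> norm_num

/-- Coupling bound for the Wasserstein distance:
`W₁(μ,ν) ≤ 4R·|μ−ν|(B(x₀,R)) + 32 ∫_{R/2}^∞ |μ−ν|(B(x₀,r)ᶜ) dr`. -/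
theorem wasserstein1_coupling_bound {M : Type*} [MetricSpace M] [MeasurableSpace M]
    [BorelSpace M] (μ ν : Measure M) [IsProbabilityMeasure μ] [IsProbabilityMeasure ν]
    (x₀ : M) (R : ℝ) (hR : 0 < R) :
    wasserstein1 μ ν
      ≤ ENNReal.ofReal (4*R)
            * (μ.toSignedMeasure - ν.toSignedMeasure).totalVariation (Metric.ball x₀ R)
        + 32 * ∫⁻ r in Set.Ioi (R/2),
            (μ.toSignedMeasure - ν.toSignedMeasure).totalVariation (Metric.ball x₀ r)ᶜ := by
  haveI : IsFiniteMeasure ((μ.toSignedMeasure - ν.toSignedMeasure).totalVariation) := by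
    unfold SignedMeasure.totalVariation
    haveI := (μ.toSignedMeasure - ν.toSignedMeasure).toJordanDecomposition.posPart_finite
    haveI := (μ.toSignedMeasure - ν.toSignedMeasure).toJordanDecomposition.negPart_finite
    infer_instance
  exact (aux_coupling μ ν x₀).trans (aux_layercake _ x₀ R hR)
end

section
/- Quantitative prime number theorem implies: for all sufficiently large n, |p_n − Li^{-1}(n)| ≤ C·n·e^{−√(log n)}, where p_n is the n-th prime and Li^{-1} is the inverse of the logarithmic integral. -/
open Real Filter MeasureTheory Set Topology

/-- The logarithmic integral. -/
noncomputable def LL (x : ℝ) : ℝ := ∫ t in (2:ℝ)..x, 1 / Real.log t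

lemma logint_contOn {s : Set ℝ} (hs : s ⊆ Set.Ici 2) :
    ContinuousOn (fun t : ℝ => 1 / Real.log t) s := by
  apply ContinuousOn.div continuousOn_const
  · refine Real.continuousOn_log.mono fun x hx => ?_
    have h2 : (2:ℝ) ≤ x := hs hx
    simp only [Set.mem_compl_iff, Set.mem_singleton_iff]
    intro h; rw [h] at h2; norm_num at h2
  · intro x hx
    have h2 : (2:ℝ) ≤ x := hs hx
    exact ne_of_gt (Real.log_pos (by linarith))

lemma logint_integrable {a b : ℝ} (ha : 2 ≤ a) (hab : a ≤ b) :
    IntervalIntegrable (fun t : ℝ => 1 / Real.log t) volume a b := by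
  apply ContinuousOn.intervalIntegrable
  apply logint_contOn
  rw [Set.uIcc_of_le hab]
  exact fun x hx => le_trans ha hx.1

lemma LL_sub {a b : ℝ} (ha : 2 ≤ a) (hab : a ≤ b) :
    LL b - LL a = ∫ t in a..b, 1 / Real.log t := by
  unfold LL
  exact intervalIntegral.integral_interval_sub_left
    (logint_integrable le_rfl (le_trans ha hab)) (logint_integrable le_rfl ha)

lemma LL_sub_ge {a b : ℝ} (ha : 2 ≤ a) (hab : a ≤ b) :
    (b - a) / Real.log b ≤ LL b - LL a := by
  rw [LL_sub ha hab]
  have hb : 2 ≤ b := le_trans ha hab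
  have hlb : 0 < Real.log b := Real.log_pos (by linarith)
  have h : ∀ x ∈ Set.Icc a b, 1 / Real.log b ≤ 1 / Real.log x := by
    intro x hx
    have hx1 : 2 ≤ x := le_trans ha hx.1
    have hlx : 0 < Real.log x := Real.log_pos (by linarith)
    exact one_div_le_one_div_of_le hlx (Real.log_le_log (by linarith) hx.2)
  calc (b - a) / Real.log b = ∫ _ in a..b, 1 / Real.log b := by
        rw [intervalIntegral.integral_const, smul_eq_mul]; ring
    _ ≤ ∫ t in a..b, 1 / Real.log t :=
        intervalIntegral.integral_mono_on hab intervalIntegrable_const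
          (logint_integrable ha hab) h

lemma LL_sub_le {a b : ℝ} (ha : 2 ≤ a) (hab : a ≤ b) :
    LL b - LL a ≤ (b - a) / Real.log 2 := by
  rw [LL_sub ha hab]
  have hl2 : 0 < Real.log 2 := Real.log_pos (by norm_num)
  have h : ∀ x ∈ Set.Icc a b, 1 / Real.log x ≤ 1 / Real.log 2 := by
    intro x hx
    have hx1 : 2 ≤ x := le_trans ha hx.1
    exact one_div_le_one_div_of_le hl2 (Real.log_le_log (by norm_num) hx1)
  calc (∫ t in a..b, 1 / Real.log t) ≤ ∫ _ in a..b, 1 / Real.log 2 :=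
        intervalIntegral.integral_mono_on hab (logint_integrable ha hab)
          intervalIntegrable_const h
    _ = (b - a) / Real.log 2 := by
        rw [intervalIntegral.integral_const, smul_eq_mul]; ring

lemma LL_two : LL 2 = 0 := intervalIntegral.integral_same

lemma LL_ge {x : ℝ} (hx : 2 ≤ x) : (x - 2) / Real.log x ≤ LL x := by
  have := LL_sub_ge le_rfl hx
  rw [LL_two] at this; linarith

lemma LL_le {x : ℝ} (hx : 2 ≤ x) : LL x ≤ (x - 2) / Real.log 2 := by
  have := LL_sub_le le_rfl hx
  rw [LL_two] at this; linarith

lemma LL_contOn {M : ℝ} : ContinuousOn LL (Set.Icc 2 M) := by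
  have hl2 : 0 < Real.log 2 := Real.log_pos (by norm_num)
  have key : ∀ x y : ℝ, 2 ≤ x → x ≤ y → dist (LL x) (LL y) ≤ (Real.log 2)⁻¹ * dist x y := by
    intro x y hx hxy
    have h1 := LL_sub_ge hx hxy
    have h2 := LL_sub_le hx hxy
    have h3 : 0 ≤ LL y - LL x := by
      refine le_trans ?_ h1
      have hly : 0 < Real.log y := Real.log_pos (by linarith)
      exact div_nonneg (by linarith) hly.le
    rw [Real.dist_eq, Real.dist_eq, abs_sub_comm (LL x), abs_sub_comm x,
      abs_of_nonneg h3, abs_of_nonneg (by linarith : (0:ℝ) ≤ y - x)]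
    rw [div_eq_inv_mul] at h2
    exact h2
  apply LipschitzOnWith.continuousOn (K := Real.toNNReal (Real.log 2)⁻¹)
  apply LipschitzOnWith.of_dist_le_mul
  intro x hx y hy
  rw [Real.coe_toNNReal _ (inv_nonneg.mpr hl2.le)]
  rcases le_total x y with h | h
  · exact key x y hx.1 h
  · rw [dist_comm (LL x), dist_comm x]
    exact key y x hy.1 h

lemma sqrt_tendsto_atTop : Tendsto Real.sqrt atTop atTop := by
  refine tendsto_atTop_atTop.2 fun b => ⟨(max b 0) ^ 2, fun a ha => ?_⟩
  calc b ≤ max b 0 := le_max_left _ _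
    _ = Real.sqrt ((max b 0) ^ 2) := (Real.sqrt_sq (le_max_right _ _)).symm
    _ ≤ Real.sqrt a := Real.sqrt_le_sqrt ha

lemma pow_exp_neg_mul_tendsto (k : ℕ) {b : ℝ} (hb : 0 < b) :
    Tendsto (fun t : ℝ => t ^ k * Real.exp (-b * t)) atTop (𝓝 0) := by
  have h0 := Real.tendsto_pow_mul_exp_neg_atTop_nhds_zero k
  have hbt : Tendsto (fun t : ℝ => b * t) atTop atTop :=
    Tendsto.const_mul_atTop hb tendsto_id
  have h1 := (h0.comp hbt).const_mul ((b ^ k)⁻¹)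
  rw [mul_zero] at h1
  refine h1.congr fun t => ?_
  simp only [Function.comp]
  rw [mul_pow, neg_mul]
  have : (b : ℝ) ^ k ≠ 0 := by positivity
  field_simp

set_option maxHeartbeats 1000000 in
/-- Quantitative PNT implies: for all large `n`,
`|p_n − Li⁻¹(n)| ≤ C n e^{−√(log n)}`, where `p_n` is the `n`-th prime,
`Li(x) = ∫_2^x dt/log t`, and `Linv` is an inverse of `Li`. -/
theorem prime_nth_li_inverse_bound
    (Li Linv : ℝ → ℝ)
    (hLi : ∀ x : ℝ, Li x = ∫ t in (2:ℝ)..x, 1 / Real.log t)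
    (hinv₁ : ∀ x : ℝ, 2 ≤ x → Linv (Li x) = x)
    (hinv₂ : ∀ y : ℝ, 0 ≤ y → Li (Linv y) = y)
    (hPNT : ∀ c : ℝ, 1 ≤ c → ∃ C : ℝ, 0 < C ∧ ∀ x : ℝ, 2 ≤ x →
      |(Nat.primeCounting ⌊x⌋₊ : ℝ) - Li x| ≤ C * x * Real.exp (-c * Real.sqrt (Real.log x))) :
    ∃ C : ℝ, 0 < C ∧ ∃ n₀ : ℕ, ∀ n : ℕ, n₀ ≤ n →
      |(Nat.nth Nat.Prime (n-1) : ℝ) - Linv n|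
        ≤ C * n * Real.exp (-Real.sqrt (Real.log n)) := by
  have hLL : ∀ x, Li x = LL x := fun x => hLi x
  obtain ⟨C₃, hC₃, hP⟩ := hPNT 3 (by norm_num)
  have hlog : Tendsto Real.log atTop atTop := Real.tendsto_log_atTop
  have hs : Tendsto (fun x : ℝ => Real.sqrt (Real.log x)) atTop atTop :=
    sqrt_tendsto_atTop.comp hlog
  -- three tendsto facts composed
  have T1 : Tendsto (fun x : ℝ => Real.log x * Real.exp (-3 * Real.sqrt (Real.log x)))
      atTop (𝓝 0) := by
    have h := (pow_exp_neg_mul_tendsto 2 (by norm_num : (0:ℝ) < 3)).comp hs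
    refine h.congr' ?_
    filter_upwards [eventually_ge_atTop (1:ℝ)] with x hx
    simp only [Function.comp]
    rw [Real.sq_sqrt (Real.log_nonneg hx)]
  have T2 : Tendsto (fun x : ℝ => Real.log x * Real.exp (-(1/2) * Real.log x))
      atTop (𝓝 0) := by
    have h := (pow_exp_neg_mul_tendsto 1 (by norm_num : (0:ℝ) < 1/2)).comp hlog
    refine h.congr fun x => ?_
    simp [Function.comp]
  have T3 : Tendsto (fun x : ℝ => (Real.log x) ^ 2 * Real.exp (-2 * Real.sqrt (Real.log x)))
      atTop (𝓝 0) := by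
    have h := (pow_exp_neg_mul_tendsto 4 (by norm_num : (0:ℝ) < 2)).comp hs
    refine h.congr' ?_
    filter_upwards [eventually_ge_atTop (1:ℝ)] with x hx
    simp only [Function.comp]
    rw [show (4:ℕ) = 2 * 2 from rfl, pow_mul, Real.sq_sqrt (Real.log_nonneg hx)]
  have EV1 : ∀ᶠ x : ℝ in atTop,
      4 * C₃ * (Real.log x * Real.exp (-3 * Real.sqrt (Real.log x))) < 1 := by
    have h := T1.const_mul (4 * C₃)
    rw [mul_zero] at h
    exact h.eventually_lt_const (by norm_num)
  have EV2 : ∀ᶠ x : ℝ in atTop,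
      4 * (Real.log x * Real.exp (-(1/2) * Real.log x)) < 1 := by
    have h := T2.const_mul 4
    rw [mul_zero] at h
    exact h.eventually_lt_const (by norm_num)
  have EV3 : ∀ᶠ x : ℝ in atTop,
      (Real.log x) ^ 2 * Real.exp (-2 * Real.sqrt (Real.log x)) < 1 :=
    T3.eventually_lt_const (by norm_num)
  have MASTER : ∀ᶠ x : ℝ in atTop,
      (C₃ * x * Real.exp (-3 * Real.sqrt (Real.log x)) ≤ (x - 2) / (2 * Real.log x)) ∧
      (Real.sqrt x ≤ (x - 2) / (2 * Real.log x)) ∧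
      ((Real.log x) ^ 2 * Real.exp (-2 * Real.sqrt (Real.log x)) ≤ 1) ∧
      16 ≤ x ∧ 1 ≤ Real.log x := by
    filter_upwards [EV1, EV2, EV3, eventually_ge_atTop (16:ℝ),
      hlog.eventually_ge_atTop 1] with x h1 h2 h3 h4 h5
    have hx0 : (0:ℝ) < x := by linarith
    have hlx : (0:ℝ) < Real.log x := by linarith
    have h7 : x / (4 * Real.log x) ≤ (x - 2) / (2 * Real.log x) := by
      rw [div_le_div_iff₀ (by positivity) (by positivity)]
      nlinarith
    refine ⟨?_, ?_, h3.le, h4, h5⟩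
    · have h6 : C₃ * x * Real.exp (-3 * Real.sqrt (Real.log x)) ≤ x / (4 * Real.log x) := by
        rw [le_div_iff₀ (by positivity)]
        nlinarith [mul_le_mul_of_nonneg_right h1.le hx0.le,
          Real.exp_pos (-3 * Real.sqrt (Real.log x))]
      linarith
    · have hsx : Real.sqrt x = Real.exp (Real.log x / 2) := by
        rw [Real.exp_half, Real.exp_log hx0]
      have hepos := Real.exp_pos (Real.log x / 2)
      have hmul : Real.exp (-(1/2) * Real.log x) * Real.exp (Real.log x / 2) = 1 := by
        rw [← Real.exp_add]
        rw [show -(1/2) * Real.log x + Real.log x / 2 = 0 by ring, Real.exp_zero]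
      have h8 : 4 * Real.log x ≤ Real.sqrt x := by
        rw [hsx]
        nlinarith [mul_le_mul_of_nonneg_right h2.le hepos.le]
      have h9 : Real.sqrt x * Real.sqrt x = x := Real.mul_self_sqrt hx0.le
      have h10 : Real.sqrt x ≤ x / (4 * Real.log x) := by
        rw [le_div_iff₀ (by positivity)]
        nlinarith [Real.sqrt_nonneg x]
      linarith
  obtain ⟨X₀, hX₀⟩ := eventually_atTop.mp MASTER
  obtain ⟨N, hN⟩ := exists_nat_ge (max X₀ 16)
  have hNX : X₀ ≤ (N : ℝ) := le_trans (le_max_left _ _) hN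
  refine ⟨10 * C₃, by positivity, 2 * N + 16, ?_⟩
  intro n hn
  have hn1 : 1 ≤ n := by omega
  -- the n-th prime
  set p := Nat.nth Nat.Prime (n - 1) with hp
  have hpp : Nat.Prime p := Nat.prime_nth_prime _
  have hpn : n + 1 ≤ p := by
    have := Nat.add_two_le_nth_prime (n - 1)
    omega
  have hπ : Nat.primeCounting p = n := by
    have h1 : Nat.primeCounting' p = n - 1 := Nat.primeCounting'_nth_eq _
    have h2 : Nat.primeCounting p = Nat.primeCounting' p + 1 := by
      show Nat.count Nat.Prime (p + 1) = Nat.count Nat.Prime p + 1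
      rw [Nat.count_succ, if_pos hpp]
    omega
  -- real versions
  set P : ℝ := (p : ℝ) with hPdef
  set nn : ℝ := (n : ℝ) with hnn
  have hnnN : 2 * (N : ℝ) + 16 ≤ nn := by
    rw [hnn]
    exact_mod_cast Nat.cast_le.mpr hn
  have hnn16 : (16:ℝ) ≤ nn := by
    have h0 : (0:ℝ) ≤ (N:ℝ) := Nat.cast_nonneg N
    linarith
  have hnnX₀ : X₀ ≤ nn := by
    have h0 : (0:ℝ) ≤ (N:ℝ) := Nat.cast_nonneg N
    linarith
  have hnP : nn + 1 ≤ P := by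
    rw [hPdef, hnn]
    exact_mod_cast hpn
  have hP2 : (2:ℝ) ≤ P := by linarith
  have hPX₀ : X₀ ≤ P := by linarith
  -- PNT bound at P
  have hb := hP P hP2
  rw [Nat.floor_natCast, hπ, hLL] at hb
  -- hb : |nn - LL P| ≤ C₃ * P * exp (-3 √(log P))
  -- find q with LL q = nn via IVT
  set M : ℝ := 2 + 2 * nn ^ 2 with hM
  have hM2 : (2:ℝ) ≤ M := by nlinarith
  have hlogM_pos : 0 < Real.log M := Real.log_pos (by nlinarith)
  have hlogM : Real.log M ≤ 2 * nn := by
    have h1 : M ≤ (2 * nn) ^ 2 := by nlinarith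
    have h2 : Real.log M ≤ Real.log ((2 * nn) ^ 2) :=
      Real.log_le_log (by positivity) h1
    have h3 : Real.log ((2 * nn) ^ 2) = 2 * Real.log (2 * nn) := by
      rw [Real.log_pow]; norm_num
    have h4 : Real.log (2 * nn) ≤ nn := by
      rw [Real.log_mul (by norm_num) (by intro h; rw [h] at hnn16; norm_num at hnn16)]
      have ha : Real.log 2 ≤ 1 := by
        have := Real.log_le_sub_one_of_pos (by norm_num : (0:ℝ) < 2); linarith
      have hbb : Real.log nn ≤ nn - 1 := Real.log_le_sub_one_of_pos (by linarith)
      linarith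
    linarith
  have hLLM : nn ≤ LL M := by
    have h1 := LL_ge hM2
    have h2 : nn * Real.log M ≤ 2 * nn ^ 2 := by nlinarith
    have h3 : nn ≤ (M - 2) / Real.log M := by
      rw [le_div_iff₀ hlogM_pos]
      have hM2' : M - 2 = 2 * nn ^ 2 := by rw [hM]; ring
      linarith
    linarith
  have hmem : nn ∈ Set.Icc (LL 2) (LL M) := by
    rw [LL_two]
    exact ⟨by positivity, hLLM⟩
  obtain ⟨q, hqmem, hq⟩ := intermediate_value_Icc hM2 LL_contOn hmem
  have hq2 : (2:ℝ) ≤ q := hqmem.1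
  -- Linv n = q
  have hLinv : Linv nn = q := by
    have := hinv₁ q hq2
    rw [hLL, hq] at this
    exact this
  -- q is large
  have hqlarge : X₀ ≤ q := by
    have h1 := LL_le hq2
    rw [hq] at h1
    have hl2' : (0:ℝ) < Real.log 2 := Real.log_pos (by norm_num)
    have h2 : nn * Real.log 2 ≤ q - 2 := (le_div_iff₀ hl2').mp h1
    have hl2half : (1:ℝ)/2 ≤ Real.log 2 := by
      have := Real.log_two_gt_d9; linarith
    have h3 : nn * (1/2) ≤ nn * Real.log 2 :=
      mul_le_mul_of_nonneg_left hl2half (by linarith)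
    linarith
  -- the master facts at P, q, nn
  obtain ⟨E1p, E2p, -, h16p, h1logp⟩ := hX₀ P hPX₀
  obtain ⟨-, E2q, -, h16q, h1logq⟩ := hX₀ q hqlarge
  obtain ⟨-, -, E3n, h16n, h1logn⟩ := hX₀ nn hnnX₀
  have hlogP_pos : (0:ℝ) < Real.log P := by linarith
  have hlogq_pos : (0:ℝ) < Real.log q := by linarith
  have hlogn_pos : (0:ℝ) < Real.log nn := by linarith
  -- Step 1 : (P-2)/(2 log P) ≤ nn
  have hLLP_ge := LL_ge hP2
  have hbub : LL P ≤ nn + C₃ * P * Real.exp (-3 * Real.sqrt (Real.log P)) := by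
    have h := (abs_le.mp hb).1
    linarith
  have S1 : (P - 2) / (2 * Real.log P) ≤ nn := by
    have hid : (P - 2) / Real.log P = 2 * ((P - 2) / (2 * Real.log P)) := by
      field_simp
    linarith [E1p]
  -- Step 2 : P ≤ nn ^ 2
  have S2 : P ≤ nn ^ 2 := by
    have h := E2p.trans S1
    exact (Real.sqrt_le_left (by positivity)).mp h
  -- Step 3 : log P ≤ 2 log nn
  have S3 : Real.log P ≤ 2 * Real.log nn := by
    have h1 : Real.log P ≤ Real.log (nn ^ 2) := Real.log_le_log (by linarith) S2
    rw [Real.log_pow] at h1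
    push_cast at h1
    linarith
  -- Step 4 : P ≤ 5 nn log nn
  have S4 : P ≤ 5 * nn * Real.log nn := by
    have h1 : P - 2 ≤ nn * (2 * Real.log P) := by
      rw [div_le_iff₀ (by positivity)] at S1
      linarith
    nlinarith [mul_le_mul_of_nonneg_left S3 (by linarith : (0:ℝ) ≤ 2 * nn),
      mul_le_mul hnn16 h1logn zero_le_one (by linarith : (0:ℝ) ≤ nn)]
  -- Step 5 : q ≤ nn ^ 2 and log q ≤ 2 log nn
  have S5 : q ≤ nn ^ 2 := by
    have h1 := LL_ge hq2
    rw [hq] at h1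
    have h2 : (q - 2) / (2 * Real.log q) ≤ (q - 2) / Real.log q := by
      rw [div_le_div_iff₀ (by positivity) hlogq_pos]
      nlinarith [mul_nonneg (by linarith : (0:ℝ) ≤ q - 2) hlogq_pos.le]
    have h3 : Real.sqrt q ≤ nn := le_trans E2q (le_trans h2 h1)
    exact (Real.sqrt_le_left (by positivity)).mp h3
  have S3q : Real.log q ≤ 2 * Real.log nn := by
    have h1 : Real.log q ≤ Real.log (nn ^ 2) := Real.log_le_log (by linarith) S5
    rw [Real.log_pow] at h1
    push_cast at h1
    linarith
  -- Step 6 : mean value type bound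
  have S6 : |P - q| ≤ 2 * Real.log nn * |nn - LL P| := by
    rcases le_total q P with hcase | hcase
    · have hd := LL_sub_ge hq2 hcase
      rw [hq] at hd
      have h1 : P - q ≤ (LL P - nn) * Real.log P := (div_le_iff₀ hlogP_pos).mp hd
      have h0 : 0 ≤ LL P - nn :=
        le_trans (div_nonneg (by linarith) hlogP_pos.le) hd
      have h2 : LL P - nn ≤ |nn - LL P| := by
        rw [abs_sub_comm]; exact le_abs_self _
      rw [abs_of_nonneg (by linarith : (0:ℝ) ≤ P - q)]
      calc P - q ≤ (LL P - nn) * Real.log P := h1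
        _ ≤ |nn - LL P| * (2 * Real.log nn) :=
            mul_le_mul h2 S3 hlogP_pos.le (abs_nonneg _)
        _ = 2 * Real.log nn * |nn - LL P| := by ring
    · have hd := LL_sub_ge hP2 hcase
      rw [hq] at hd
      have h1 : q - P ≤ (nn - LL P) * Real.log q := (div_le_iff₀ hlogq_pos).mp hd
      have h0 : 0 ≤ nn - LL P :=
        le_trans (div_nonneg (by linarith) hlogq_pos.le) hd
      have h2 : nn - LL P ≤ |nn - LL P| := le_abs_self _
      rw [abs_sub_comm, abs_of_nonneg (by linarith : (0:ℝ) ≤ q - P)]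
      calc q - P ≤ (nn - LL P) * Real.log q := h1
        _ ≤ |nn - LL P| * (2 * Real.log nn) :=
            mul_le_mul h2 S3q hlogq_pos.le (abs_nonneg _)
        _ = 2 * Real.log nn * |nn - LL P| := by ring
  -- Step 7 : bound the error term at nn
  have S7 : |nn - LL P| ≤ C₃ * (5 * nn * Real.log nn) * Real.exp (-3 * Real.sqrt (Real.log nn)) := by
    refine hb.trans ?_
    have hexp : Real.exp (-3 * Real.sqrt (Real.log P)) ≤ Real.exp (-3 * Real.sqrt (Real.log nn)) := by
      apply Real.exp_le_exp.mpr
      have h1 : Real.log nn ≤ Real.log P := Real.log_le_log (by linarith) (by linarith)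
      have h2 : Real.sqrt (Real.log nn) ≤ Real.sqrt (Real.log P) := Real.sqrt_le_sqrt h1
      linarith
    have hnonneg : (0:ℝ) ≤ C₃ * (5 * nn * Real.log nn) := by
      apply mul_nonneg hC₃.le
      apply mul_nonneg (by linarith) hlogn_pos.le
    calc C₃ * P * Real.exp (-3 * Real.sqrt (Real.log P))
        ≤ C₃ * (5 * nn * Real.log nn) * Real.exp (-3 * Real.sqrt (Real.log P)) := by
          apply mul_le_mul_of_nonneg_right (mul_le_mul_of_nonneg_left S4 hC₃.le)
            (Real.exp_pos _).le
      _ ≤ C₃ * (5 * nn * Real.log nn) * Real.exp (-3 * Real.sqrt (Real.log nn)) :=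
          mul_le_mul_of_nonneg_left hexp hnonneg
  -- assemble
  have hsplit : Real.exp (-3 * Real.sqrt (Real.log nn))
      = Real.exp (-2 * Real.sqrt (Real.log nn)) * Real.exp (-Real.sqrt (Real.log nn)) := by
    rw [← Real.exp_add]; congr 1; ring
  rw [hLinv]
  calc |P - q| ≤ 2 * Real.log nn * (C₃ * (5 * nn * Real.log nn) * Real.exp (-3 * Real.sqrt (Real.log nn))) :=
        S6.trans (mul_le_mul_of_nonneg_left S7 (by linarith : (0:ℝ) ≤ 2 * Real.log nn))
    _ = 10 * C₃ * nn * ((Real.log nn) ^ 2 * Real.exp (-2 * Real.sqrt (Real.log nn)) * Real.exp (-Real.sqrt (Real.log nn))) := by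
        rw [hsplit]; ring
    _ ≤ 10 * C₃ * nn * (1 * Real.exp (-Real.sqrt (Real.log nn))) := by
        apply mul_le_mul_of_nonneg_left _ (by positivity)
        exact mul_le_mul_of_nonneg_right E3n (Real.exp_pos _).le
    _ = 10 * C₃ * nn * Real.exp (-Real.sqrt (Real.log nn)) := by ring
end
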